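/- The exact boundary formula for f''(x₀) follows from linear algebra: the coefficients c₀ = −23/(2h²), c₁ = 16/(2h²), c₂ = 7/(2h²) for function values and d₀ = −6/h, d₁ = −8/h, d₂ = −1/h for derivative values satisfy, for every polynomial p of degree ≤ 4, the identity p''(x₀) = c₀ p(x₀) + c₁ p(x₀+h) + c₂ p(x₀+2h) + d₀ p'(x₀) + d₁ p'(x₀+h) + d₂ p'(x₀+2h). -/

import Mathlib

/-! The defect `RHS - p''(x₀)` is linear in `p`, and the polynomials of degree at most 4 are
spanned by `1, X, …, X⁴`; so it suffices to check the formula on these five monomials. -/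

open Polynomial

theorem Polynomial.map_eq_zero_of_degree_le_of_X_pow {R M : Type*} [CommRing R] [AddCommGroup M]
    [Module R M] (f : R[X] →ₗ[R] M) {n : ℕ} (hf : ∀ k ≤ n, f (X ^ k) = 0) {p : R[X]}
    (hp : p.degree ≤ n) : f p = 0 := by
  classical
  rw [← mem_degreeLE, degreeLE_eq_span_X_pow] at hp
  refine (Submodule.span_le (p := LinearMap.ker f)).mpr ?_ hp
  simpa [Set.subset_def, Nat.lt_succ_iff] using hf

noncomputable def boundaryDefect (h x₀ : ℝ) : ℝ[X] →ₗ[ℝ] ℝ :=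
  (-23 / (2 * h ^ 2)) • leval x₀ + (16 / (2 * h ^ 2)) • leval (x₀ + h)
    + (7 / (2 * h ^ 2)) • leval (x₀ + 2 * h)
    + ((-6 / h) • leval x₀ + (-8 / h) • leval (x₀ + h) + (-1 / h) • leval (x₀ + 2 * h))
      ∘ₗ derivative
    - leval x₀ ∘ₗ derivative ∘ₗ derivative

theorem boundaryDefect_apply (h x₀ : ℝ) (p : ℝ[X]) :
    boundaryDefect h x₀ p =
      (-23 / (2 * h ^ 2)) * p.eval x₀ + (16 / (2 * h ^ 2)) * p.eval (x₀ + h)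
        + (7 / (2 * h ^ 2)) * p.eval (x₀ + 2 * h)
        + (-6 / h) * p.derivative.eval x₀ + (-8 / h) * p.derivative.eval (x₀ + h)
        + (-1 / h) * p.derivative.eval (x₀ + 2 * h) - p.derivative.derivative.eval x₀ := by
  simp only [boundaryDefect, LinearMap.sub_apply, LinearMap.add_apply, LinearMap.smul_apply,
    LinearMap.comp_apply, leval_apply, derivative_apply, smul_eq_mul]
  ring

theorem boundaryDefect_X_pow {h : ℝ} (hh : h ≠ 0) (x₀ : ℝ) (k : ℕ) (hk : k ≤ 4) :
    boundaryDefect h x₀ (X ^ k) = 0 := by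
  rw [boundaryDefect_apply]
  interval_cases k <;> simp <;> field_simp <;> ring

theorem boundary_formula_exact_on_quartics (h x₀ : ℝ) (hh : 0 < h)
    (p : Polynomial ℝ) (hp : p.degree ≤ 4) :
    (p.derivative.derivative).eval x₀ =
      (-23 / (2 * h ^ 2)) * p.eval x₀ + (16 / (2 * h ^ 2)) * p.eval (x₀ + h)
        + (7 / (2 * h ^ 2)) * p.eval (x₀ + 2 * h)
        + (-6 / h) * p.derivative.eval x₀ + (-8 / h) * p.derivative.eval (x₀ + h)
        + (-1 / h) * p.derivative.eval (x₀ + 2 * h) := by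
  have hdefect : boundaryDefect h x₀ p = 0 :=
    map_eq_zero_of_degree_le_of_X_pow _ (boundaryDefect_X_pow hh.ne' x₀) hp
  rw [boundaryDefect_apply] at hdefect
  linarith
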